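/- arXiv:2502.06267 — 2 statements merged into one kernel-verified Lean document; each statement's English description precedes it below -/
import Mathlib

section
/- If a sequence {αₙ} ⊂ M(T, η̄) converges pointwise to a function α, then α ∈ M(T, η̄) and Φ[αₙ] → Φ[α]. -/
/-! Both integrals in `Φ` pass to the limit by dominated convergence. Every `β ∈ M(T, η̄)`
satisfies `0 ≤ β ≤ T η̄` on `[0, T]`, so the exponential weights `e^{±(β + δ t)}` are bounded
there uniformly in `β`, and `K` takes only two values: the inner integral is dominated by a
multiple of `c`, and the resulting outer integrand by a multiple of `w`. -/

open MeasureTheory intervalIntegral Real Set Filter Topology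

noncomputable def Kker (T δ ηb t r : ℝ) : ℝ :=
  if r < t then (1 - Real.exp (-(ηb + δ) * T))⁻¹ else (Real.exp ((ηb + δ) * T) - 1)⁻¹

noncomputable def Sfun (T δ ηb : ℝ) (c α : ℝ → ℝ) (t : ℝ) : ℝ :=
  Real.exp (-(α t) - δ * t) * ∫ r in (0:ℝ)..T, Kker T δ ηb t r * c r * Real.exp (α r + δ * r)

noncomputable def Phi (T δ ηb : ℝ) (c w α : ℝ → ℝ) : ℝ :=
  ∫ t in (0:ℝ)..T, w t * Sfun T δ ηb c α t

def MemM (T ηb : ℝ) (α : ℝ → ℝ) : Prop :=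
  Monotone α ∧ (∀ t, ContinuousWithinAt α (Set.Ici t) t) ∧ α 0 = 0 ∧
    (∀ t, α (t + T) = α t + α T) ∧ α T = T * ηb

noncomputable def hfun (T δ ηb : ℝ) (c w α : ℝ → ℝ) (t : ℝ) : ℝ :=
  w t * Real.exp (-(α t) - δ * t) *
      (∫ r in (0:ℝ)..T, Kker T δ ηb t r * c r * Real.exp (α r + δ * r)) -
    c t * Real.exp (α t + δ * t) *
      (∫ r in (0:ℝ)..T, Kker T δ ηb r t * w r * Real.exp (-(α r) - δ * r))

noncomputable def psi (T δ ηb : ℝ) (c w α : ℝ → ℝ) (t : ℝ) : ℝ :=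
  - ∫ s in (0:ℝ)..t, hfun T δ ηb c w α s

def SuppM (α : ℝ → ℝ) : Set ℝ := {t | ∀ ε > 0, 0 < α (t + ε) - α (t - ε)}

def IsOpt (T δ ηb : ℝ) (c w α : ℝ → ℝ) : Prop :=
  MemM T ηb α ∧ ∀ β, MemM T ηb β → Phi T δ ηb c w α ≤ Phi T δ ηb c w β

open scoped Interval

theorem tendsto_intervalIntegral_mul_of_bounded {μ : Measure ℝ} {a b M : ℝ} {f G : ℝ → ℝ}
    {g : ℕ → ℝ → ℝ} (hf : IntervalIntegrable f μ a b)
    (hg_meas : ∀ n, AEStronglyMeasurable (g n) (μ.restrict (Ι a b)))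
    (hg_bound : ∀ n, ∀ x ∈ Ι a b, |g n x| ≤ M)
    (hg_lim : ∀ x ∈ Ι a b, Tendsto (fun n => g n x) atTop (𝓝 (G x))) :
    Tendsto (fun n => ∫ x in a..b, f x * g n x ∂μ) atTop (𝓝 (∫ x in a..b, f x * G x ∂μ)) := by
  refine tendsto_integral_filter_of_dominated_convergence (fun x => |f x| * M)
    (.of_forall fun n => hf.def'.aestronglyMeasurable.mul (hg_meas n))
    (.of_forall fun n => ae_of_all _ fun x hx => ?_) (hf.abs.mul_const M)
    (ae_of_all _ fun x hx => (hg_lim x hx).const_mul (f x))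
  rw [Real.norm_eq_abs, abs_mul]
  exact mul_le_mul_of_nonneg_left (hg_bound n x hx) (abs_nonneg _)

theorem abs_intervalIntegral_mul_le {μ : Measure ℝ} {a b M : ℝ} {f g : ℝ → ℝ} (hab : a ≤ b)
    (hf : IntervalIntegrable f μ a b) (hg : ∀ x ∈ Ioc a b, |g x| ≤ M) :
    |∫ x in a..b, f x * g x ∂μ| ≤ ∫ x in a..b, |f x| * M ∂μ := by
  rw [← Real.norm_eq_abs]
  refine norm_integral_le_of_norm_le hab (ae_of_all _ fun x hx => ?_) (hf.abs.mul_const M)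
  rw [Real.norm_eq_abs, abs_mul]
  exact mul_le_mul_of_nonneg_left (hg x hx) (abs_nonneg _)

theorem exists_abs_Kker_le (T δ ηb : ℝ) : ∃ C, ∀ t r, |Kker T δ ηb t r| ≤ C :=
  ⟨max |(1 - exp (-(ηb + δ) * T))⁻¹| |(exp ((ηb + δ) * T) - 1)⁻¹|, fun t r => by
    unfold Kker; split_ifs <;> simp⟩

theorem measurable_Kker (T δ ηb : ℝ) : Measurable (Function.uncurry (Kker T δ ηb)) :=
  Measurable.ite (measurableSet_lt measurable_snd measurable_fst) measurable_const measurable_const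

namespace MemM

variable {T ηb : ℝ} {β : ℝ → ℝ}

theorem abs_add_mul_le (hβ : MemM T ηb β) (δ : ℝ) {r : ℝ} (hr : r ∈ Icc 0 T) :
    |β r + δ * r| ≤ T * ηb + |δ| * T := by
  obtain ⟨hmono, -, h0, -, hT⟩ := hβ
  have h1 : 0 ≤ β r := h0 ▸ hmono hr.1
  have h2 : β r ≤ T * ηb := hT ▸ hmono hr.2
  calc |β r + δ * r| ≤ |β r| + |δ| * |r| := (abs_add_le _ _).trans_eq (by rw [abs_mul])
    _ ≤ T * ηb + |δ| * T := by
      rw [abs_of_nonneg h1, abs_of_nonneg hr.1]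
      gcongr
      exact hr.2

theorem exp_add_mul_le (hβ : MemM T ηb β) (δ : ℝ) {r : ℝ} (hr : r ∈ Icc 0 T) :
    exp (β r + δ * r) ≤ exp (T * ηb + |δ| * T) :=
  exp_le_exp.2 ((le_abs_self _).trans (hβ.abs_add_mul_le δ hr))

theorem exp_neg_sub_mul_le (hβ : MemM T ηb β) (δ : ℝ) {r : ℝ} (hr : r ∈ Icc 0 T) :
    exp (-β r - δ * r) ≤ exp (T * ηb + |δ| * T) :=
  exp_le_exp.2 (by linarith [neg_abs_le (β r + δ * r), hβ.abs_add_mul_le δ hr])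

/-- Right-continuity is the only defining property of `M(T, η̄)` lost under pointwise limits. -/
theorem monotone_normalized_of_tendsto {βn : ℕ → ℝ → ℝ} (hβn : ∀ n, MemM T ηb (βn n))
    (hlim : ∀ t, Tendsto (fun n => βn n t) atTop (𝓝 (β t))) :
    Monotone β ∧ β 0 = 0 ∧ (∀ t, β (t + T) = β t + β T) ∧ β T = T * ηb := by
  refine ⟨fun a b hab => le_of_tendsto_of_tendsto' (hlim a) (hlim b) fun n => (hβn n).1 hab,
    tendsto_nhds_unique (hlim 0) ?_, fun t => tendsto_nhds_unique (hlim (t + T)) ?_,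
    tendsto_nhds_unique (hlim T) ?_⟩
  · simp only [fun n => (hβn n).2.2.1, tendsto_const_nhds]
  · simpa only [fun n => (hβn n).2.2.2.1 t] using (hlim t).add (hlim T)
  · simp only [fun n => (hβn n).2.2.2.2, tendsto_const_nhds]

end MemM

theorem exists_abs_Kker_mul_exp_le (T δ ηb : ℝ) : ∃ C, ∀ β, MemM T ηb β → ∀ t, ∀ r ∈ Icc 0 T,
    |Kker T δ ηb t r * exp (β r + δ * r)| ≤ C := by
  obtain ⟨C, hC⟩ := exists_abs_Kker_le T δ ηb
  refine ⟨C * exp (T * ηb + |δ| * T), fun β hβ t r hr => ?_⟩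
  rw [abs_mul, abs_exp]
  exact mul_le_mul (hC t r) (hβ.exp_add_mul_le δ hr) (exp_pos _).le ((abs_nonneg _).trans (hC t r))

section Sfun

variable {T δ ηb : ℝ} {c : ℝ → ℝ}

theorem Sfun_eq (β : ℝ → ℝ) (t : ℝ) :
    Sfun T δ ηb c β t =
      exp (-β t - δ * t) * ∫ r in 0..T, c r * (Kker T δ ηb t r * exp (β r + δ * r)) := by
  simp only [Sfun, mul_left_comm (c _), mul_assoc]

theorem aestronglyMeasurable_Sfun {μ : Measure ℝ} {β : ℝ → ℝ} (hT : 0 ≤ T)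
    (hc : AEStronglyMeasurable c (volume.restrict (Ioc 0 T))) (hβ : Measurable β) :
    AEStronglyMeasurable (Sfun T δ ηb c β) μ := by
  have hinner : AEStronglyMeasurable
      (fun t => ∫ r in Ioc 0 T, Kker T δ ηb t r * c r * exp (β r + δ * r)) μ :=
    AEStronglyMeasurable.integral_prod_right'
      (f := fun p : ℝ × ℝ => Kker T δ ηb p.1 p.2 * c p.2 * exp (β p.2 + δ * p.2))
      (((measurable_Kker T δ ηb).aestronglyMeasurable.mul hc.comp_snd).mul
        (by fun_prop : Measurable fun p : ℝ × ℝ => exp (β p.2 + δ * p.2)).aestronglyMeasurable)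
  unfold Sfun
  simp only [integral_of_le hT]
  exact (by fun_prop : Measurable fun t => exp (-β t - δ * t)).aestronglyMeasurable.mul hinner

theorem exists_abs_Sfun_le (hT : 0 ≤ T) (hc : IntervalIntegrable c volume 0 T) :
    ∃ M, ∀ β, MemM T ηb β → ∀ t ∈ Icc 0 T, |Sfun T δ ηb c β t| ≤ M := by
  obtain ⟨C, hC⟩ := exists_abs_Kker_mul_exp_le T δ ηb
  refine ⟨exp (T * ηb + |δ| * T) * ∫ r in 0..T, |c r| * C, fun β hβ t ht => ?_⟩
  rw [Sfun_eq, abs_mul, abs_exp]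
  exact mul_le_mul (hβ.exp_neg_sub_mul_le δ ht)
    (abs_intervalIntegral_mul_le hT hc fun r hr => hC β hβ t r (Ioc_subset_Icc_self hr))
    (abs_nonneg _) (exp_pos _).le

theorem tendsto_Sfun (hT : 0 ≤ T) (hc : IntervalIntegrable c volume 0 T) {αn : ℕ → ℝ → ℝ}
    {α : ℝ → ℝ} (hαn : ∀ n, MemM T ηb (αn n))
    (hlim : ∀ t, Tendsto (fun n => αn n t) atTop (𝓝 (α t))) (t : ℝ) :
    Tendsto (fun n => Sfun T δ ηb c (αn n) t) atTop (𝓝 (Sfun T δ ηb c α t)) := by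
  obtain ⟨C, hC⟩ := exists_abs_Kker_mul_exp_le T δ ηb
  have hI : Ι 0 T = Ioc 0 T := uIoc_of_le hT
  simp only [Sfun_eq]
  refine ((continuous_exp.tendsto _).comp (((hlim t).neg).sub_const (δ * t))).mul
    (tendsto_intervalIntegral_mul_of_bounded hc (fun n => ?_)
      (fun n r hr => hC _ (hαn n) t r (Ioc_subset_Icc_self (hI ▸ hr)))
      (fun r _ => ((continuous_exp.tendsto _).comp ((hlim r).add_const _)).const_mul _))
  have hαn_meas := (hαn n).1.measurable
  exact ((measurable_Kker T δ ηb).of_uncurry_left.mul (by fun_prop)).aestronglyMeasurable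

end Sfun

theorem stmt3_general (T δ ηb : ℝ) (c w : ℝ → ℝ) (αn : ℕ → ℝ → ℝ) (α : ℝ → ℝ)
    (hT : 0 < T)
    (hcI : IntegrableOn c (Set.Icc 0 T))
    (hwI : IntegrableOn w (Set.Icc 0 T))
    (hαn : ∀ n, MemM T ηb (αn n))
    (hlim : ∀ t, Tendsto (fun n => αn n t) atTop (𝓝 (α t))) :
    Monotone α ∧ α 0 = 0 ∧ (∀ t, α (t + T) = α t + α T) ∧ α T = T * ηb ∧
      Tendsto (fun n => Phi T δ ηb c w (αn n)) atTop (𝓝 (Phi T δ ηb c w α)) := by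
  have hI : Ι 0 T = Ioc 0 T := uIoc_of_le hT.le
  have hc : IntervalIntegrable c volume 0 T :=
    (intervalIntegrable_iff_integrableOn_Ioc_of_le hT.le).2 (hcI.mono_set Ioc_subset_Icc_self)
  have hw : IntervalIntegrable w volume 0 T :=
    (intervalIntegrable_iff_integrableOn_Ioc_of_le hT.le).2 (hwI.mono_set Ioc_subset_Icc_self)
  obtain ⟨hmono, h0, hper, hαT⟩ := MemM.monotone_normalized_of_tendsto hαn hlim
  obtain ⟨M, hM⟩ := exists_abs_Sfun_le (δ := δ) hT.le hc
  exact ⟨hmono, h0, hper, hαT, tendsto_intervalIntegral_mul_of_bounded hw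
    (fun n => aestronglyMeasurable_Sfun hT.le (hI ▸ hc.def'.aestronglyMeasurable)
      (hαn n).1.measurable)
    (fun n t ht => hM _ (hαn n) t (Ioc_subset_Icc_self (hI ▸ ht)))
    (fun t _ => tendsto_Sfun hT.le hc hαn hlim t)⟩

theorem stmt3 (T δ ηb : ℝ) (c w : ℝ → ℝ) (αn : ℕ → ℝ → ℝ) (α : ℝ → ℝ)
    (hT : 0 < T) (hδ : 0 < δ) (hη : 0 < ηb)
    (hc0 : ∀ t, 0 ≤ c t) (hcP : ∀ t, c (t + T) = c t) (hcI : IntegrableOn c (Set.Icc 0 T))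
    (hw0 : ∀ t, 0 ≤ w t) (hwP : ∀ t, w (t + T) = w t) (hwI : IntegrableOn w (Set.Icc 0 T))
    (hαn : ∀ n, MemM T ηb (αn n))
    (hlim : ∀ t, Tendsto (fun n => αn n t) atTop (𝓝 (α t))) :
    Monotone α ∧ α 0 = 0 ∧ (∀ t, α (t + T) = α t + α T) ∧ α T = T * ηb ∧
      Tendsto (fun n => Phi T δ ηb c w (αn n)) atTop (𝓝 (Phi T δ ηb c w α)) :=
  stmt3_general T δ ηb c w αn α hT hcI hwI hαn hlim
end

section
/- Under the assumptions that c, w ∈ L¹₊ are T-periodic, neither identically zero, and at least one of them positive a.e., there exists a unique minimizer α_opt ∈ M(T, η̄) of the functional Φ over M(T, η̄). -/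
open MeasureTheory intervalIntegral Real Set Filter Topology

/-!
On the square `[0, T]²` the functional reads `Φ[α] = ∫∫ G(t, r) exp (α r - α t)` with a weight
`G(t, r) = w t * c r * K(t, r) * exp (δ (r - t)) ≥ 0`, and for `α ∈ M(T, η̄)` the increments
`α r - α t` lie in `[-T η̄, T η̄]` there, so `Φ` is continuous under a.e. convergence of increments
by dominated convergence.

Existence: Helly's selection theorem extracts from a minimizing sequence a subsequence converging,
off a countable set, to a monotone right-continuous `A`; the shift relation
`α (t + T) = α t + T η̄` passes to the limit, so `A - A 0 ∈ M(T, η̄)` attains the infimum.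

Uniqueness: for two minimizers `α, β`, the midpoint `(α + β) / 2` is admissible, so strict
convexity of `exp` forces `α r - α t = β r - β t` wherever `w t * c r ≠ 0`. Since `c` and `w` are
not a.e. zero and one of them is a.e. positive, `α - β` is a.e. constant on `[0, T]`; being
`T`-periodic, right-continuous and zero at `0`, it vanishes.
-/

theorem eq_of_continuousWithinAt_Ici_of_dense {f : ℝ → ℝ} {D : Set ℝ} (hD : Dense D)
    {t u k : ℝ} (htu : t < u) (hf : ContinuousWithinAt f (Ici t) t)
    (hk : ∀ s ∈ D ∩ Ioo t u, f s = k) : f t = k := by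
  refine isClosed_singleton.mem_of_frequently_of_tendsto ?_ (hf.mono Ioi_subset_Ici_self)
  rw [Filter.frequently_iff]
  intro U hU
  obtain ⟨v, hv, hvU⟩ := mem_nhdsGT_iff_exists_Ioo_subset.1 hU
  obtain ⟨s, hsD, hts, hsv⟩ := hD.exists_between (lt_min htu hv)
  exact ⟨s, hvU ⟨hts, hsv.trans_le (min_le_right _ _)⟩,
    hk s ⟨hsD, hts, hsv.trans_le (min_le_left _ _)⟩⟩

theorem exp_midpoint_lt {a b : ℝ} (hab : a ≠ b) : exp ((a + b) / 2) < (exp a + exp b) / 2 := by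
  have := strictConvexOn_exp.2 (mem_univ a) (mem_univ b) hab (by norm_num : (0:ℝ) < 1 / 2)
    (by norm_num : (0:ℝ) < 1 / 2) (by norm_num)
  rw [show (a + b) / 2 = 1 / 2 * a + 1 / 2 * b by ring]
  simp only [smul_eq_mul] at this
  linarith

theorem exp_midpoint_le (a b : ℝ) : exp ((a + b) / 2) ≤ (exp a + exp b) / 2 := by
  rcases eq_or_ne a b with rfl | hab
  · simp only [add_self_div_two, le_refl]
  · exact (exp_midpoint_lt hab).le

theorem exists_ae_eq_const_of_ae_prod {X M Y : Type*} [MeasurableSpace X] [Zero M]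
    {μ : Measure X} [SFinite μ] {f g : X → M} {Δ : X → Y}
    (hf : ¬ f =ᵐ[μ] 0) (hg : ¬ g =ᵐ[μ] 0) (hfg : (∀ᵐ t ∂μ, f t ≠ 0) ∨ ∀ᵐ t ∂μ, g t ≠ 0)
    (h : ∀ᵐ p ∂μ.prod μ, f p.1 ≠ 0 → g p.2 ≠ 0 → Δ p.2 = Δ p.1) :
    ∃ k, ∀ᵐ t ∂μ, Δ t = k := by
  have hf : ∃ᵐ t ∂μ, f t ≠ 0 := Filter.not_eventually.1 hf
  have hg : ∃ᵐ t ∂μ, g t ≠ 0 := Filter.not_eventually.1 hg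
  have h := Measure.ae_ae_of_ae_prod h
  rcases hfg with hf' | hg'
  · have h' : ∀ᵐ t ∂μ, ∀ᵐ r ∂μ, g r ≠ 0 → Δ r = Δ t := by
      filter_upwards [h, hf'] with t ht hft
      filter_upwards [ht] with r hr using hr hft
    obtain ⟨t₀, ht₀, -⟩ := (h'.and_frequently hf).exists
    refine ⟨Δ t₀, ?_⟩
    filter_upwards [h'] with t ht
    obtain ⟨r, ⟨hr, hr₀⟩, hgr⟩ := ((ht.and ht₀).and_frequently hg).exists
    exact (hr hgr).symm.trans (hr₀ hgr)
  · obtain ⟨t₀, ht₀, hft₀⟩ := (h.and_frequently hf).exists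
    exact ⟨Δ t₀, by filter_upwards [ht₀, hg'] with r hr hgr using hr hft₀ hgr⟩

theorem exists_subseq_tendsto_of_forall_abs_le {ι : Type*} [Countable ι] (x : ℕ → ι → ℝ)
    (hx : ∀ i, ∃ C, ∀ n, |x n i| ≤ C) :
    ∃ φ : ℕ → ℕ, StrictMono φ ∧ ∃ v : ι → ℝ, ∀ i, Tendsto (fun k => x (φ k) i) atTop (𝓝 (v i)) := by
  choose C hC using hx
  obtain ⟨v, -, φ, hφ, hlim⟩ := (isCompact_univ_pi fun i => isCompact_Icc (a := -C i)
    (b := C i)).tendsto_subseq (x := x) fun n i _ => abs_le.1 (hC i n)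
  exact ⟨φ, hφ, v, fun i => tendsto_pi_nhds.1 hlim i⟩

/-- `hAle` and `hAlt` say that `A t = ⨅ q > t, v q`. -/
theorem tendsto_of_continuousAt_of_tendsto_rat {a : ℕ → ℝ → ℝ} (hmono : ∀ k, Monotone (a k))
    {v : ℚ → ℝ} (hv : ∀ q : ℚ, Tendsto (fun k => a k q) atTop (𝓝 (v q))) {A : ℝ → ℝ}
    (hAle : ∀ (t : ℝ) (q : ℚ), t < q → A t ≤ v q)
    (hAlt : ∀ t b, A t < b → ∃ q : ℚ, t < q ∧ v q < b) {t : ℝ} (ht : ContinuousAt A t) :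
    Tendsto (fun k => a k t) atTop (𝓝 (A t)) := by
  refine tendsto_order.2 ⟨fun b hb => ?_, fun b hb => ?_⟩
  · have hlt : ∀ᶠ s in 𝓝[<] t, b < A s ∧ s < t :=
      (eventually_nhdsWithin_of_eventually_nhds (ht.eventually (eventually_gt_nhds hb))).and
        self_mem_nhdsWithin
    obtain ⟨s, hbs, hst⟩ := hlt.exists
    obtain ⟨q, hsq, hqt⟩ := exists_rat_btwn hst
    filter_upwards [(hv q).eventually (eventually_gt_nhds (hbs.trans_le (hAle s q hsq)))]
      with k hk using hk.trans_le (hmono _ hqt.le)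
  · obtain ⟨q, htq, hqb⟩ := hAlt t b hb
    filter_upwards [(hv q).eventually (eventually_lt_nhds hqb)] with k hk
    exact (hmono _ htq.le).trans_lt hk

/-- Helly's selection theorem. -/
theorem exists_subseq_tendsto_of_monotone {a : ℕ → ℝ → ℝ} (hmono : ∀ n, Monotone (a n))
    (hbdd : ∀ t, ∃ C, ∀ n, |a n t| ≤ C) :
    ∃ φ : ℕ → ℕ, StrictMono φ ∧ ∃ A : ℝ → ℝ, Monotone A ∧
      (∀ t, ContinuousWithinAt A (Ici t) t) ∧
      ∀ t, ContinuousAt A t → Tendsto (fun k => a (φ k) t) atTop (𝓝 (A t)) := by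
  obtain ⟨φ, hφ, v, hv⟩ :=
    exists_subseq_tendsto_of_forall_abs_le (fun n (q : ℚ) => a n q) fun q => hbdd q
  have hne (t : ℝ) : Nonempty {q : ℚ // t < (q : ℝ)} := by
    obtain ⟨q, hq⟩ := exists_rat_gt t
    exact ⟨⟨q, hq⟩⟩
  have hbddA : ∀ t : ℝ, BddBelow (range fun q : {q : ℚ // t < (q : ℝ)} => v q) := by
    intro t
    obtain ⟨C, hC⟩ := hbdd t
    refine ⟨-C, ?_⟩
    rintro _ ⟨q, rfl⟩
    exact ge_of_tendsto' (hv q) fun k => (neg_le_of_abs_le (hC _)).trans (hmono _ q.2.le)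
  set A : ℝ → ℝ := fun t => ⨅ q : {q : ℚ // t < (q : ℝ)}, v q
  have hAle : ∀ (t : ℝ) (q : ℚ), t < q → A t ≤ v q := fun t q hq => ciInf_le (hbddA t) ⟨q, hq⟩
  have hAlt (t b : ℝ) (h : A t < b) : ∃ q : ℚ, t < q ∧ v q < b := by
    have := hne t
    obtain ⟨q, hq⟩ := exists_lt_of_ciInf_lt h
    exact ⟨q.1, q.2, hq⟩
  have hAm : Monotone A := fun s t hst => by
    have := hne t
    exact le_ciInf fun q => hAle s q (hst.trans_lt q.2)
  refine ⟨φ, hφ, A, hAm, fun t => tendsto_order.2 ⟨fun b hb => ?_, fun b hb => ?_⟩, ?_⟩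
  · filter_upwards [self_mem_nhdsWithin] with s hs using hb.trans_le (hAm hs)
  · obtain ⟨q, htq, hqb⟩ := hAlt t b hb
    filter_upwards [eventually_nhdsWithin_of_eventually_nhds (eventually_lt_nhds htq)] with s hs
    exact (hAle s q hs).trans_lt hqb
  exact fun t ht => tendsto_of_continuousAt_of_tendsto_rat (a := fun k => a (φ k))
    (fun k => hmono (φ k)) hv hAle hAlt ht

/-- The relation holds on the co-countable set where `A` is continuous at `t` and at `t + T`;
right-continuity extends it to every `t`. -/
theorem Monotone.add_eq_of_tendsto {a : ℕ → ℝ → ℝ} {A : ℝ → ℝ} {T d : ℝ} (hA : Monotone A)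
    (hrc : ∀ t, ContinuousWithinAt A (Ici t) t)
    (hlim : ∀ t, ContinuousAt A t → Tendsto (fun k => a k t) atTop (𝓝 (A t)))
    (ha : ∀ k t, a k (t + T) = a k t + d) (t : ℝ) : A (t + T) = A t + d := by
  set N := {s | ¬ContinuousAt A s}
  have hN : N.Countable := hA.countable_not_continuousAt
  have hD : Dense (N ∪ (· + T) ⁻¹' N)ᶜ :=
    (hN.union (hN.preimage (add_left_injective T))).dense_compl ℝ
  have hshift : ContinuousWithinAt (fun s => A (s + T) - A s) (Ici t) t :=
    ((hrc (t + T)).comp (f := (· + T)) (continuous_add_const T).continuousWithinAt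
      fun s (hs : t ≤ s) => by simpa using hs).sub (hrc t)
  refine eq_add_of_sub_eq' (eq_of_continuousWithinAt_Ici_of_dense
    (f := fun s => A (s + T) - A s) hD (lt_add_one t) hshift ?_)
  rintro s ⟨hs, -⟩
  simp only [compl_union, mem_inter_iff, mem_compl_iff, mem_preimage, N, mem_ofPred_eq,
    not_not] at hs
  rw [sub_eq_iff_eq_add']
  refine tendsto_nhds_unique (hlim _ hs.2) ?_
  simpa only [ha] using (hlim s hs.1).add_const d

section MemM

variable {T ηb : ℝ} {α β : ℝ → ℝ}

theorem memM_linear (hη : 0 ≤ ηb) : MemM T ηb (fun t => ηb * t) :=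
  ⟨monotone_id.const_mul hη, fun _ => (continuous_const_mul ηb).continuousWithinAt, mul_zero _,
    fun _ => by ring, mul_comm _ _⟩

theorem MemM.midpoint (hα : MemM T ηb α) (hβ : MemM T ηb β) :
    MemM T ηb (fun t => (α t + β t) / 2) := by
  obtain ⟨hαm, hαc, hα0, hαp, hαT⟩ := hα
  obtain ⟨hβm, hβc, hβ0, hβp, hβT⟩ := hβ
  refine ⟨fun s t hst => ?_, fun t => ((hαc t).add (hβc t)).div_const 2, ?_, fun t => ?_, ?_⟩
  · linarith [hαm hst, hβm hst]
  · simp [hα0, hβ0]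
  · simp only [hαp t, hβp t]; ring
  · simp only [hαT, hβT]; ring

theorem memM_sub_apply_zero (hm : Monotone α) (hrc : ∀ t, ContinuousWithinAt α (Ici t) t)
    (hper : ∀ t, α (t + T) = α t + T * ηb) : MemM T ηb (fun t => α t - α 0) := by
  have hT : α T - α 0 = T * ηb := by linarith [zero_add T ▸ hper 0]
  refine ⟨fun s t hst => sub_le_sub_right (hm hst) _, fun t => (hrc t).sub_const _,
    sub_self _, fun t => ?_, hT⟩
  simp only [hper, hT]; ring

theorem MemM.mem_Icc_of_mem_Icc (hα : MemM T ηb α) {t : ℝ} (ht : t ∈ Icc 0 T) :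
    α t ∈ Icc 0 (T * ηb) :=
  ⟨hα.2.2.1 ▸ hα.1 ht.1, hα.2.2.2.2 ▸ hα.1 ht.2⟩

theorem MemM.periodic_sub_mul (hα : MemM T ηb α) : Function.Periodic (fun t => α t - ηb * t) T :=
  fun t => by simp only [hα.2.2.2.1 t, hα.2.2.2.2]; ring

theorem MemM.mem_Icc (hα : MemM T ηb α) (hT : 0 < T) (hη : 0 ≤ ηb) (t : ℝ) :
    α t ∈ Icc (ηb * (t - T)) (ηb * (t + T)) := by
  obtain ⟨s, hs, hts⟩ := hα.periodic_sub_mul.exists_mem_Ico₀ hT t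
  have hαs := hα.mem_Icc_of_mem_Icc (Ico_subset_Icc_self hs)
  have hηs : ηb * s ≤ T * ηb := by nlinarith [hs.2]
  have hηs' : 0 ≤ ηb * s := mul_nonneg hη hs.1
  constructor <;> nlinarith [hαs.1, hαs.2]

end MemM

section Phi

variable {T δ ηb : ℝ} {c w α : ℝ → ℝ}

theorem Kker_pos (h : 0 < (ηb + δ) * T) (t r : ℝ) : 0 < Kker T δ ηb t r := by
  unfold Kker
  split_ifs
  · have : exp (-(ηb + δ) * T) < 1 := exp_lt_one_iff.2 (by linarith [neg_mul (ηb + δ) T])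
    exact inv_pos.2 (by linarith)
  · exact inv_pos.2 (by linarith [one_lt_exp_iff.2 h])

theorem Kker_le_max (t r : ℝ) :
    Kker T δ ηb t r ≤ max (1 - exp (-(ηb + δ) * T))⁻¹ (exp ((ηb + δ) * T) - 1)⁻¹ :=
  ite_le_sup _ _ (r < t)

theorem measurable_Kker_s4 : Measurable fun p : ℝ × ℝ => Kker T δ ηb p.1 p.2 :=
  Measurable.ite (measurableSet_lt measurable_snd measurable_fst) measurable_const measurable_const

noncomputable def phiWeight (T δ ηb : ℝ) (c w : ℝ → ℝ) (p : ℝ × ℝ) : ℝ :=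
  w p.1 * c p.2 * Kker T δ ηb p.1 p.2 * exp (δ * (p.2 - p.1))

/-- `p = (t, r)`, in the variables of `Phi`. -/
noncomputable def phiIntegrand (T δ ηb : ℝ) (c w α : ℝ → ℝ) (p : ℝ × ℝ) : ℝ :=
  phiWeight T δ ηb c w p * exp (α p.2 - α p.1)

noncomputable def squareMeasure (T : ℝ) : Measure (ℝ × ℝ) :=
  (volume.restrict (Icc 0 T)).prod (volume.restrict (Icc 0 T))

theorem phiWeight_nonneg (h : 0 < (ηb + δ) * T) (hc0 : ∀ t, 0 ≤ c t) (hw0 : ∀ t, 0 ≤ w t)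
    (p : ℝ × ℝ) : 0 ≤ phiWeight T δ ηb c w p := by
  have := Kker_pos h p.1 p.2
  have := hc0 p.2
  have := hw0 p.1
  unfold phiWeight
  positivity

theorem phiWeight_ne_zero (h : 0 < (ηb + δ) * T) {p : ℝ × ℝ} (hw : w p.1 ≠ 0) (hc : c p.2 ≠ 0) :
    phiWeight T δ ηb c w p ≠ 0 :=
  mul_ne_zero (mul_ne_zero (mul_ne_zero hw hc) (Kker_pos h p.1 p.2).ne') (exp_pos _).ne'

theorem ae_mem_squareMeasure : ∀ᵐ p ∂squareMeasure T, p ∈ Icc 0 T ×ˢ Icc 0 T := by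
  rw [squareMeasure, Measure.prod_restrict]
  exact ae_restrict_mem (measurableSet_Icc.prod measurableSet_Icc)

theorem integrable_mul_squareMeasure (hcI : IntegrableOn c (Icc 0 T))
    (hwI : IntegrableOn w (Icc 0 T)) :
    Integrable (fun p : ℝ × ℝ => w p.1 * c p.2) (squareMeasure T) :=
  hwI.mul_prod hcI

theorem Monotone.aestronglyMeasurable_phiIntegrand (hα : Monotone α)
    (hcI : IntegrableOn c (Icc 0 T)) (hwI : IntegrableOn w (Icc 0 T)) :
    AEStronglyMeasurable (phiIntegrand T δ ηb c w α) (squareMeasure T) := by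
  have hm : Measurable fun p : ℝ × ℝ =>
      Kker T δ ηb p.1 p.2 * exp (δ * (p.2 - p.1)) * exp (α p.2 - α p.1) := by
    have := hα.measurable
    exact (measurable_Kker_s4.mul (by fun_prop)).mul (by fun_prop)
  convert (integrable_mul_squareMeasure hcI hwI).aestronglyMeasurable.mul
    hm.aestronglyMeasurable using 1
  funext p
  simp only [phiIntegrand, phiWeight, Pi.mul_apply]
  ring

theorem exists_bound_phiIntegrand (hδ : 0 ≤ δ) (h : 0 < (ηb + δ) * T) (hc0 : ∀ t, 0 ≤ c t)
    (hw0 : ∀ t, 0 ≤ w t) : ∃ C, ∀ α, MemM T ηb α →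
      ∀ᵐ p ∂squareMeasure T, ‖phiIntegrand T δ ηb c w α p‖ ≤ C * (w p.1 * c p.2) := by
  refine ⟨max (1 - exp (-(ηb + δ) * T))⁻¹ (exp ((ηb + δ) * T) - 1)⁻¹ * exp (δ * T) *
    exp (T * ηb), fun α hα => ?_⟩
  filter_upwards [ae_mem_squareMeasure] with p ⟨⟨ht0, htT⟩, ⟨hr0, hrT⟩⟩
  have hαt := hα.mem_Icc_of_mem_Icc ⟨ht0, htT⟩
  have hαr := hα.mem_Icc_of_mem_Icc ⟨hr0, hrT⟩
  rw [phiIntegrand, norm_of_nonneg (mul_nonneg (phiWeight_nonneg h hc0 hw0 p) (exp_pos _).le)]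
  calc phiWeight T δ ηb c w p * exp (α p.2 - α p.1)
      = w p.1 * c p.2 * (Kker T δ ηb p.1 p.2 * exp (δ * (p.2 - p.1)) * exp (α p.2 - α p.1)) := by
        simp only [phiWeight]; ring
    _ ≤ w p.1 * c p.2 * (max (1 - exp (-(ηb + δ) * T))⁻¹ (exp ((ηb + δ) * T) - 1)⁻¹ *
          exp (δ * T) * exp (T * ηb)) := by
        have hK := Kker_pos h p.1 p.2
        have := mul_nonneg (hw0 p.1) (hc0 p.2)
        have := hK.trans_le (Kker_le_max p.1 p.2)
        gcongr
        · exact Kker_le_max p.1 p.2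
        · nlinarith
        · linarith [hαt.1, hαr.2]
    _ = _ := mul_comm _ _

theorem MemM.integrable_phiIntegrand (hα : MemM T ηb α) (hδ : 0 ≤ δ) (h : 0 < (ηb + δ) * T)
    (hc0 : ∀ t, 0 ≤ c t) (hw0 : ∀ t, 0 ≤ w t)
    (hcI : IntegrableOn c (Icc 0 T)) (hwI : IntegrableOn w (Icc 0 T)) :
    Integrable (phiIntegrand T δ ηb c w α) (squareMeasure T) := by
  obtain ⟨C, hC⟩ := exists_bound_phiIntegrand hδ h hc0 hw0
  exact ((integrable_mul_squareMeasure hcI hwI).const_mul C).mono'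
    (hα.1.aestronglyMeasurable_phiIntegrand hcI hwI) (hC α hα)

theorem Phi_eq_integral_phiIntegrand (hT : 0 ≤ T)
    (hint : Integrable (phiIntegrand T δ ηb c w α) (squareMeasure T)) :
    Phi T δ ηb c w α = ∫ p, phiIntegrand T δ ηb c w α p ∂squareMeasure T := by
  rw [squareMeasure, integral_prod _ hint, Phi, intervalIntegral.integral_of_le hT,
    ← integral_Icc_eq_integral_Ioc]
  refine setIntegral_congr_fun measurableSet_Icc fun t _ => ?_
  rw [Sfun, intervalIntegral.integral_of_le hT, ← integral_Icc_eq_integral_Ioc,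
    ← mul_assoc, ← MeasureTheory.integral_const_mul]
  refine setIntegral_congr_fun measurableSet_Icc fun r _ => ?_
  have he : exp (-α t - δ * t) * exp (α r + δ * r) = exp (δ * (r - t)) * exp (α r - α t) := by
    rw [← exp_add, ← exp_add]; ring_nf
  simp only [phiIntegrand, phiWeight]
  linear_combination (w t * Kker T δ ηb t r * c r) * he

theorem Phi_nonneg (hT : 0 ≤ T) (h : 0 < (ηb + δ) * T) (hc0 : ∀ t, 0 ≤ c t)
    (hw0 : ∀ t, 0 ≤ w t) (α : ℝ → ℝ) : 0 ≤ Phi T δ ηb c w α := by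
  refine intervalIntegral.integral_nonneg hT fun t _ => mul_nonneg (hw0 t) ?_
  refine mul_nonneg (exp_pos _).le (intervalIntegral.integral_nonneg hT fun r _ => ?_)
  have := Kker_pos h t r
  have := hc0 r
  positivity

theorem MemM.Phi_eq_integral (hα : MemM T ηb α) (hT : 0 ≤ T) (hδ : 0 ≤ δ)
    (h : 0 < (ηb + δ) * T) (hc0 : ∀ t, 0 ≤ c t) (hw0 : ∀ t, 0 ≤ w t)
    (hcI : IntegrableOn c (Icc 0 T)) (hwI : IntegrableOn w (Icc 0 T)) :
    Phi T δ ηb c w α = ∫ p, phiIntegrand T δ ηb c w α p ∂squareMeasure T :=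
  Phi_eq_integral_phiIntegrand hT (hα.integrable_phiIntegrand hδ h hc0 hw0 hcI hwI)

theorem tendsto_Phi {αs : ℕ → ℝ → ℝ} (hT : 0 ≤ T) (hδ : 0 ≤ δ) (h : 0 < (ηb + δ) * T)
    (hc0 : ∀ t, 0 ≤ c t) (hw0 : ∀ t, 0 ≤ w t)
    (hcI : IntegrableOn c (Icc 0 T)) (hwI : IntegrableOn w (Icc 0 T))
    (hαs : ∀ k, MemM T ηb (αs k)) (hα : MemM T ηb α)
    (hlim : ∀ᵐ p ∂squareMeasure T,
      Tendsto (fun k => αs k p.2 - αs k p.1) atTop (𝓝 (α p.2 - α p.1))) :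
    Tendsto (fun k => Phi T δ ηb c w (αs k)) atTop (𝓝 (Phi T δ ηb c w α)) := by
  obtain ⟨C, hC⟩ := exists_bound_phiIntegrand hδ h hc0 hw0
  simp only [fun k => (hαs k).Phi_eq_integral hT hδ h hc0 hw0 hcI hwI,
    hα.Phi_eq_integral hT hδ h hc0 hw0 hcI hwI]
  refine tendsto_integral_of_dominated_convergence _
    (fun k => (hαs k).1.aestronglyMeasurable_phiIntegrand hcI hwI)
    ((integrable_mul_squareMeasure hcI hwI).const_mul C) (fun k => hC _ (hαs k)) ?_
  filter_upwards [hlim] with p hp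
  exact ((continuous_exp.tendsto _).comp hp).const_mul _

end Phi

section Uniqueness

variable {T δ ηb : ℝ} {c w α β : ℝ → ℝ}

theorem MemM.eq_of_ae_sub_eq (hα : MemM T ηb α) (hβ : MemM T ηb β) (hT : 0 < T) {k : ℝ}
    (h : ∀ᵐ t ∂volume.restrict (Icc 0 T), α t - β t = k) : α = β := by
  have hper : Function.Periodic (fun t => α t - β t) T := fun t => by
    simpa using hα.periodic_sub_mul.sub hβ.periodic_sub_mul t
  have hD : Dense {s | s ∈ Icc 0 T → α s - β s = k} :=
    Measure.dense_of_ae ((ae_restrict_iff' measurableSet_Icc).1 h)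
  have hIco : ∀ t ∈ Ico 0 T, α t - β t = k := fun t ht =>
    eq_of_continuousWithinAt_Ici_of_dense (f := fun t => α t - β t) hD ht.2
      ((hα.2.1 t).sub (hβ.2.1 t))
      fun s ⟨hs, hts, hsT⟩ => hs ⟨ht.1.trans hts.le, hsT.le⟩
  have hk : k = 0 := by
    rw [← hIco 0 ⟨le_rfl, hT⟩, hα.2.2.1, hβ.2.2.1, sub_self]
  funext t
  obtain ⟨s, hs, hts⟩ := hper.exists_mem_Ico₀ hT t
  linarith [hts.trans (hIco s hs)]

theorem IsOpt.ae_sub_eq (hA : IsOpt T δ ηb c w α) (hB : IsOpt T δ ηb c w β)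
    (hT : 0 ≤ T) (hδ : 0 ≤ δ) (h : 0 < (ηb + δ) * T) (hc0 : ∀ t, 0 ≤ c t) (hw0 : ∀ t, 0 ≤ w t)
    (hcI : IntegrableOn c (Icc 0 T)) (hwI : IntegrableOn w (Icc 0 T)) :
    ∀ᵐ p ∂squareMeasure T, w p.1 ≠ 0 → c p.2 ≠ 0 → α p.2 - β p.2 = α p.1 - β p.1 := by
  obtain ⟨hα, hαopt⟩ := hA
  obtain ⟨hβ, hβopt⟩ := hB
  set γ := fun t => (α t + β t) / 2
  have hγ : MemM T ηb γ := hα.midpoint hβ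
  have hIα := hα.integrable_phiIntegrand hδ h hc0 hw0 hcI hwI
  have hIβ := hβ.integrable_phiIntegrand hδ h hc0 hw0 hcI hwI
  have hIγ := hγ.integrable_phiIntegrand hδ h hc0 hw0 hcI hwI
  have hImid : Integrable (fun p =>
      (phiIntegrand T δ ηb c w α p + phiIntegrand T δ ηb c w β p) / 2) (squareMeasure T) :=
    (hIα.add hIβ).div_const 2
  set gap : ℝ × ℝ → ℝ := fun p =>
    (exp (α p.2 - α p.1) + exp (β p.2 - β p.1)) / 2 -
      exp (((α p.2 - α p.1) + (β p.2 - β p.1)) / 2)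
  have hF : (fun p => phiWeight T δ ηb c w p * gap p) = fun p =>
      (phiIntegrand T δ ηb c w α p + phiIntegrand T δ ηb c w β p) / 2 -
        phiIntegrand T δ ηb c w γ p := by
    funext p
    simp only [gap, γ, phiIntegrand]
    ring_nf
  have hF0 : ∀ p, 0 ≤ phiWeight T δ ηb c w p * gap p :=
    fun p => mul_nonneg (phiWeight_nonneg h hc0 hw0 p) (sub_nonneg.2 (exp_midpoint_le _ _))
  have hFint : ∫ p, phiWeight T δ ηb c w p * gap p ∂squareMeasure T = 0 := by
    refine le_antisymm ?_ (integral_nonneg hF0)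
    rw [hF, MeasureTheory.integral_sub hImid hIγ, MeasureTheory.integral_div,
      MeasureTheory.integral_add hIα hIβ,
      ← hα.Phi_eq_integral hT hδ h hc0 hw0 hcI hwI, ← hβ.Phi_eq_integral hT hδ h hc0 hw0 hcI hwI,
      ← hγ.Phi_eq_integral hT hδ h hc0 hw0 hcI hwI]
    linarith [hαopt γ hγ, hβopt γ hγ]
  have hFae := (integral_eq_zero_iff_of_nonneg hF0 (hF ▸ hImid.sub hIγ)).1 hFint
  filter_upwards [hFae] with p hp hw hc
  by_contra hne
  have hlt := exp_midpoint_lt (a := α p.2 - α p.1) (b := β p.2 - β p.1)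
    (by contrapose! hne; linarith)
  exact (mul_pos ((phiWeight_nonneg h hc0 hw0 p).lt_of_ne' (phiWeight_ne_zero h hw hc))
    (sub_pos.2 hlt)).ne' hp

theorem IsOpt.eq (hA : IsOpt T δ ηb c w α)
    (hB : IsOpt T δ ηb c w β) (hT : 0 < T) (hδ : 0 ≤ δ) (h : 0 < (ηb + δ) * T)
    (hc0 : ∀ t, 0 ≤ c t) (hw0 : ∀ t, 0 ≤ w t)
    (hcI : IntegrableOn c (Icc 0 T)) (hwI : IntegrableOn w (Icc 0 T))
    (hcne : ¬ c =ᵐ[volume.restrict (Icc 0 T)] 0) (hwne : ¬ w =ᵐ[volume.restrict (Icc 0 T)] 0)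
    (hpos : (∀ᵐ t ∂volume.restrict (Icc 0 T), w t ≠ 0) ∨
      ∀ᵐ t ∂volume.restrict (Icc 0 T), c t ≠ 0) : α = β := by
  obtain ⟨k, hk⟩ := exists_ae_eq_const_of_ae_prod (Δ := fun t => α t - β t) hwne hcne hpos
    (hA.ae_sub_eq hB hT.le hδ h hc0 hw0 hcI hwI)
  exact hA.1.eq_of_ae_sub_eq hB.1 hT hk

end Uniqueness

section Existence

variable {T δ ηb : ℝ} {c w : ℝ → ℝ}

theorem exists_isOpt (hT : 0 < T) (hδ : 0 ≤ δ) (hη : 0 ≤ ηb) (h : 0 < (ηb + δ) * T)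
    (hc0 : ∀ t, 0 ≤ c t) (hw0 : ∀ t, 0 ≤ w t)
    (hcI : IntegrableOn c (Icc 0 T)) (hwI : IntegrableOn w (Icc 0 T)) :
    ∃ α, IsOpt T δ ηb c w α := by
  set S := Phi T δ ηb c w '' {α | MemM T ηb α}
  have hSb : BddBelow S := ⟨0, by rintro _ ⟨α, -, rfl⟩; exact Phi_nonneg hT.le h hc0 hw0 α⟩
  have hS : S.Nonempty := ⟨_, _, memM_linear hη, rfl⟩
  obtain ⟨u, -, hu, huS⟩ := exists_seq_tendsto_sInf hS hSb
  choose a ha hau using huS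
  obtain ⟨φ, hφ, A, hAm, hArc, hAlim⟩ := exists_subseq_tendsto_of_monotone (fun n => (ha n).1)
    fun t => ⟨_, fun n => abs_le_max_abs_abs ((ha n).mem_Icc hT hη t).1
      ((ha n).mem_Icc hT hη t).2⟩
  have hper := hAm.add_eq_of_tendsto hArc hAlim fun k t => by
    rw [(ha (φ k)).2.2.2.1, (ha (φ k)).2.2.2.2]
  have hα := memM_sub_apply_zero hAm hArc hper
  have hcont : ∀ᵐ t ∂volume.restrict (Icc 0 T), ContinuousAt A t :=
    ae_restrict_of_ae (ae_iff.2 (hAm.countable_not_continuousAt.measure_zero _))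
  have hlim := tendsto_Phi hT.le hδ h hc0 hw0 hcI hwI (fun k => ha (φ k)) hα <| by
    filter_upwards [Measure.quasiMeasurePreserving_fst.ae hcont,
      Measure.quasiMeasurePreserving_snd.ae hcont] with p h1 h2
    convert (hAlim _ h2).sub (hAlim _ h1) using 2
    ring
  have hmin : Phi T δ ηb c w (fun t => A t - A 0) = sInf S :=
    tendsto_nhds_unique hlim (by simpa only [Function.comp_def, hau] using hu.comp hφ.tendsto_atTop)
  exact ⟨_, hα, fun β hβ => hmin ▸ csInf_le hSb ⟨β, hβ, rfl⟩⟩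

end Existence

theorem stmt4_general (T δ ηb : ℝ) (c w : ℝ → ℝ)
    (hT : 0 < T) (hδ : 0 < δ) (hη : 0 < ηb)
    (hc0 : ∀ t, 0 ≤ c t) (hcI : IntegrableOn c (Set.Icc 0 T))
    (hw0 : ∀ t, 0 ≤ w t) (hwI : IntegrableOn w (Set.Icc 0 T))
    (hcne : ¬ c =ᵐ[volume.restrict (Set.Icc (0:ℝ) T)] 0)
    (hwne : ¬ w =ᵐ[volume.restrict (Set.Icc (0:ℝ) T)] 0)
    (hpos : (∀ᵐ t ∂volume, 0 < c t) ∨ (∀ᵐ t ∂volume, 0 < w t)) :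
    ∃! α : ℝ → ℝ, IsOpt T δ ηb c w α := by
  have h : 0 < (ηb + δ) * T := by positivity
  have hpos' : (∀ᵐ t ∂volume.restrict (Icc 0 T), w t ≠ 0) ∨
      ∀ᵐ t ∂volume.restrict (Icc 0 T), c t ≠ 0 :=
    hpos.symm.imp (fun hw => ae_restrict_of_ae (hw.mono fun _ => ne_of_gt))
      (fun hc => ae_restrict_of_ae (hc.mono fun _ => ne_of_gt))
  obtain ⟨α, hα⟩ := exists_isOpt hT hδ.le hη.le h hc0 hw0 hcI hwI
  exact ⟨α, hα, fun β hβ => hβ.eq hα hT hδ.le h hc0 hw0 hcI hwI hcne hwne hpos'⟩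

theorem stmt4 (T δ ηb : ℝ) (c w : ℝ → ℝ)
    (hT : 0 < T) (hδ : 0 < δ) (hη : 0 < ηb)
    (hc0 : ∀ t, 0 ≤ c t) (hcP : ∀ t, c (t + T) = c t) (hcI : IntegrableOn c (Set.Icc 0 T))
    (hw0 : ∀ t, 0 ≤ w t) (hwP : ∀ t, w (t + T) = w t) (hwI : IntegrableOn w (Set.Icc 0 T))
    (hcne : ¬ c =ᵐ[volume.restrict (Set.Icc (0:ℝ) T)] 0)
    (hwne : ¬ w =ᵐ[volume.restrict (Set.Icc (0:ℝ) T)] 0)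
    (hpos : (∀ᵐ t ∂volume, 0 < c t) ∨ (∀ᵐ t ∂volume, 0 < w t)) :
    ∃! α : ℝ → ℝ, IsOpt T δ ηb c w α :=
  stmt4_general T δ ηb c w hT hδ hη hc0 hcI hw0 hwI hcne hwne hpos
end
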